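/- Let F₂ be the free monoid on two generators a, b and let S = F₂ × F₂. Then (a,1)S ∩ (b,1)S = ∅ and both (a,1) and (b,1) are left cancellable; hence S has the fem-property (every finitely generated S-act embeds into a monogenic S-act). -/

import Mathlib

universe u v w

/-- A right `S`-act: a set with an action `A × S → A` with `a·1 = a`, `a·(st) = (a·s)·t`. -/
class RAct (S : Type u) [Monoid S] (A : Type v) where
  act : A → S → A
  act_one : ∀ a : A, act a 1 = a
  act_mul : ∀ (a : A) (s t : S), act a (s * t) = act (act a s) t

infixl:70 " ⊳ " => RAct.act

/-- An `S`-morphism of right `S`-acts. -/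
def IsRActHom (S : Type u) [Monoid S] {A : Type v} {B : Type w}
    [RAct S A] [RAct S B] (f : A → B) : Prop :=
  ∀ (a : A) (s : S), f (a ⊳ s) = f a ⊳ s

/-- The free `S`-act `F_S(X) = X × S`, with `(x,s)·t = (x, st)`. -/
instance freeAct (S : Type u) [Monoid S] (X : Type w) : RAct S (X × S) where
  act p s := (p.1, p.2 * s)
  act_one p := by simp
  act_mul p s t := by simp [mul_assoc]

/-- Disjoint union of two `S`-acts. -/
instance sumAct (S : Type u) [Monoid S] {A : Type v} {B : Type w} [RAct S A] [RAct S B] :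
    RAct S (A ⊕ B) where
  act x s := Sum.elim (fun a => Sum.inl (a ⊳ s)) (fun b => Sum.inr (b ⊳ s)) x
  act_one := by rintro (a | b) <;> simp [RAct.act_one]
  act_mul := by rintro (a | b) s t <;> simp [RAct.act_mul]

/-- Congruence on a right `S`-act. -/
structure IsActCongr (S : Type u) [Monoid S] {A : Type v} [RAct S A]
    (r : A → A → Prop) : Prop where
  refl : ∀ a, r a a
  symm : ∀ {a b}, r a b → r b a
  trans : ∀ {a b c}, r a b → r b c → r a c
  act : ∀ {a b} (s : S), r a b → r (a ⊳ s) (b ⊳ s)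

/-- The act congruence generated by a set of pairs `H`. -/
def congGen (S : Type u) [Monoid S] {A : Type v} [RAct S A]
    (H : Set (A × A)) (a b : A) : Prop :=
  ∀ r : A → A → Prop, IsActCongr S r → (∀ p ∈ H, r p.1 p.2) → r a b

theorem isActCongr_congGen (S : Type u) [Monoid S] {A : Type v} [RAct S A]
    (H : Set (A × A)) : IsActCongr S (congGen S H) where
  refl a := fun _r hr _ => hr.refl a
  symm h := fun r hr hH => hr.symm (h r hr hH)
  trans h1 h2 := fun r hr hH => hr.trans (h1 r hr hH) (h2 r hr hH)
  act s h := fun r hr hH => hr.act s (h r hr hH)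

/-- Equations over an `S`-act `A` with variables from `X`:
`xs = yt` (which includes `xs = xt`) or `xs = a`. -/
inductive Eqn (S : Type u) (A : Type v) (X : Type w) where
  | vv : X → S → X → S → Eqn S A X
  | vc : X → S → A → Eqn S A X

/-- `b : X → C` is a solution of `E` in the act `C`, where `ι : A → C` interprets constants. -/
def IsSolution (S : Type u) [Monoid S] {A : Type v} {X : Type w} {C : Type*}
    [RAct S C] (ι : A → C) (E : Set (Eqn S A X)) (b : X → C) : Prop :=
  (∀ x s y t, Eqn.vv x s y t ∈ E → b x ⊳ s = b y ⊳ t) ∧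
  (∀ x s a, Eqn.vc x s a ∈ E → b x ⊳ s = ι a)

/-- A set of equations over `A` is consistent if it has a solution in some act containing `A`. -/
def Consistent (S : Type u) [Monoid S] {A : Type v} {X : Type w} [RAct S A]
    (E : Set (Eqn S A X)) : Prop :=
  ∃ (B : Type (max u v w)) (_ : RAct S B) (ι : A → B),
    Function.Injective ι ∧ IsRActHom S ι ∧ ∃ b : X → B, IsSolution S ι E b

/-- `A` is `n`-absolutely pure: every finite consistent system of equations over `A`
in at most `n` variables has a solution in `A`. -/
def NPure (S : Type u) [Monoid S] (A : Type v) [RAct S A] (n : ℕ) : Prop :=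
  ∀ E : Set (Eqn S A (Fin n)), E.Finite → Consistent S E →
    ∃ c : Fin n → A, IsSolution S id E c

/-- Almost pure: 1-absolutely pure. -/
def AlmostPure (S : Type u) [Monoid S] (A : Type v) [RAct S A] : Prop :=
  NPure S A 1

/-- Absolutely pure: `n`-absolutely pure for every `n`. -/
def AbsolutelyPure (S : Type u) [Monoid S] (A : Type v) [RAct S A] : Prop :=
  ∀ n : ℕ, NPure S A n

/-- The pairs `H(Σ)` in the free act coming from constant-free equations of `E`. -/
def Hcf (S : Type u) [Monoid S] {A : Type v} {X : Type w}
    (E : Set (Eqn S A X)) : Set ((X × S) × (X × S)) :=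
  {p | ∃ x u y v, Eqn.vv x u y v ∈ E ∧ p = ((x, u), (y, v))}

/-- The pairs `H(Σ) ∪ K(Σ)` on the disjoint union `A ⊔ F_S(X)`. -/
def HK (S : Type u) [Monoid S] {A : Type v} {X : Type w}
    (E : Set (Eqn S A X)) : Set ((A ⊕ X × S) × (A ⊕ X × S)) :=
  {p | (∃ x u y v, Eqn.vv x u y v ∈ E ∧ p = (Sum.inr (x, u), Sum.inr (y, v))) ∨
       (∃ x s a, Eqn.vc x s a ∈ E ∧ p = (Sum.inr (x, s), Sum.inl a))}

/-- Quotient of an act by a generated congruence. -/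
instance quotAct (S : Type u) [Monoid S] {A : Type v} [RAct S A] (H : Set (A × A)) :
    RAct S (Quot (congGen S H)) where
  act q s := Quot.map (fun a => a ⊳ s) (fun _a _b h => (isActCongr_congGen S H).act s h) q
  act_one := by
    rintro ⟨a⟩
    show Quot.mk _ (a ⊳ (1 : S)) = Quot.mk _ a
    rw [RAct.act_one]
  act_mul := by
    rintro ⟨a⟩ s t
    show Quot.mk _ (a ⊳ (s * t)) = Quot.mk _ (a ⊳ s ⊳ t)
    rw [RAct.act_mul]

/-- The canonical extension `A(Σ) = (A ⊔ F_S(X)) / κ_Σ`. -/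
abbrev ActExt (S : Type u) [Monoid S] {A : Type v} {X : Type w} [RAct S A]
    (E : Set (Eqn S A X)) : Type (max u v w) :=
  Quot (congGen S (HK S E))

/-- The natural map `ν_Σ : A → A(Σ)`. -/
def extOfBase (S : Type u) [Monoid S] {A : Type v} {X : Type w} [RAct S A]
    (E : Set (Eqn S A X)) (a : A) : ActExt S E :=
  Quot.mk _ (Sum.inl a)

/-- A finitely generated `S`-act. -/
def IsFG (S : Type u) [Monoid S] (A : Type v) [RAct S A] : Prop :=
  ∃ T : Finset A, ∀ a : A, ∃ t ∈ T, ∃ s : S, a = t ⊳ s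

/-- A monogenic (cyclic) `S`-act. -/
def Monogenic (S : Type u) [Monoid S] (C : Type v) [RAct S C] : Prop :=
  ∃ c : C, ∀ y : C, ∃ s : S, y = c ⊳ s

/-- `A` embeds into `C` as an `S`-act. -/
def ActEmbeds (S : Type u) [Monoid S] (A : Type v) (C : Type w) [RAct S A] [RAct S C] : Prop :=
  ∃ ι : A → C, IsRActHom S ι ∧ Function.Injective ι

/-- A finitely presented `S`-act: isomorphic to `F_S(X)/ρ` with `X` finite and
`ρ` a finitely generated congruence. -/
def IsFP (S : Type u) [Monoid S] (A : Type v) [RAct S A] : Prop :=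
  ∃ (n : ℕ) (H : Set ((Fin n × S) × (Fin n × S))), H.Finite ∧
    ∃ φ : Fin n × S → A, IsRActHom S φ ∧ Function.Surjective φ ∧
      ∀ p q : Fin n × S, φ p = φ q ↔ congGen S H p q

/-- A right coherent monoid. -/
def RightCoherent (S : Type u) [Monoid S] : Prop :=
  ∀ (A B : Type u) (_ : RAct S A) (_ : RAct S B) (ι : B → A),
    IsRActHom S ι → Function.Injective ι → IsFP S A → IsFG S B → IsFP S B

/-- The fem-property: every finitely generated `S`-act embeds into a monogenic act. -/
def FemProperty (S : Type u) [Monoid S] : Prop :=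
  ∀ (A : Type u) (_ : RAct S A), IsFG S A → ∃ (C : Type u) (_ : RAct S C),
    Monogenic S C ∧ ActEmbeds S A C

/-- A subact of an `S`-act. -/
structure Subact (S : Type u) [Monoid S] (B : Type v) [RAct S B] where
  carrier : Set B
  closed : ∀ b ∈ carrier, ∀ s : S, b ⊳ s ∈ carrier

instance subAct (S : Type u) [Monoid S] {B : Type v} [RAct S B] (T : Subact S B) :
    RAct S T.carrier where
  act a s := ⟨a.1 ⊳ s, T.closed a.1 a.2 s⟩
  act_one a := Subtype.ext (RAct.act_one a.1)
  act_mul a s t := Subtype.ext (RAct.act_mul a.1 s t)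


def BuiltFrom (S : Type u) [Monoid S] {A B : Type v} [RAct S A] [RAct S B]
    (ι : A → B) (P : ℕ → Prop) : Prop :=
  IsRActHom S ι ∧ Function.Injective ι ∧
  ∃ (ξ : Ordinal.{v}) (C : Ordinal.{v} → Subact S B),
    (C 0).carrier = Set.range ι ∧
    (∀ i j : Ordinal.{v}, i ≤ j → (C i).carrier ⊆ (C j).carrier) ∧
    (C ξ).carrier = Set.univ ∧
    (∀ ζ : Ordinal.{v}, ζ ≤ ξ → Order.IsSuccLimit ζ → (C ζ).carrier = ⋃ i ∈ Set.Iio ζ, (C i).carrier) ∧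
    (∀ i : Ordinal.{v}, i < ξ → ∃ m : ℕ, P m ∧
      (∃ E : Set (Eqn S (↥(C i).carrier) (Fin m)), Consistent S E ∧
        (∃ e : ActExt S E → B, IsRActHom S e ∧ Function.Injective e ∧
          Set.range e = (C (i + 1)).carrier ∧
          (∀ d : ↥(C i).carrier, e (extOfBase S E d) = d.1))))


/-- The right regular `S`-act: `S` acting on itself by multiplication. -/
instance regAct (S : Type u) [Monoid S] : RAct S S where
  act a s := a * s
  act_one := mul_one
  act_mul a s t := (mul_assoc a s t).symm

section FemAux

theorem replicate_append_cons_inj {α : Type*} {a b : α} (hab : a ≠ b) :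
    ∀ (m n : ℕ) (x y : List α),
      List.replicate m a ++ b :: x = List.replicate n a ++ b :: y → m = n ∧ x = y := by
  intro m
  induction m with
  | zero =>
    intro n x y h
    cases n with
    | zero => simpa using h
    | succ k =>
      rw [List.replicate_succ] at h
      simp only [List.replicate_zero, List.nil_append, List.cons_append,
        List.cons.injEq] at h
      exact absurd h.1.symm hab
  | succ k ih =>
    intro n x y h
    cases n with
    | zero =>
      rw [List.replicate_succ] at h
      simp only [List.replicate_zero, List.nil_append, List.cons_append,
        List.cons.injEq] at h
      exact absurd h.1 hab
    | succ l =>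
      rw [List.replicate_succ, List.replicate_succ] at h
      simp only [List.cons_append, List.cons.injEq] at h
      obtain ⟨hm, hx⟩ := ih l x y h.2
      exact ⟨by omega, hx⟩

/-- The disjoint left-cancellable family `p k = (a^{k+1} b, 1)` in `F₂ × F₂`. -/
def pgen (k : ℕ) : FreeMonoid (Fin 2) × FreeMonoid (Fin 2) :=
  (FreeMonoid.ofList (List.replicate (k + 1) (0 : Fin 2) ++ [1]), 1)

theorem freeMonoid_toList_inj {α : Type*} : Function.Injective (@FreeMonoid.toList α) := by
  intro x y h
  rw [← FreeMonoid.ofList_toList x, h, FreeMonoid.ofList_toList]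

theorem pgen_disj {k l : ℕ} {u v : FreeMonoid (Fin 2) × FreeMonoid (Fin 2)}
    (h : pgen k * u = pgen l * v) : k = l ∧ u = v := by
  have h1 : (pgen k * u).1.toList = (pgen l * v).1.toList := by rw [h]
  have h2 : (pgen k * u).2 = (pgen l * v).2 := by rw [h]
  rw [Prod.fst_mul, Prod.fst_mul, FreeMonoid.toList_mul, FreeMonoid.toList_mul] at h1
  simp only [pgen, FreeMonoid.toList_ofList, List.append_assoc, List.singleton_append] at h1
  obtain ⟨hm, hx⟩ := replicate_append_cons_inj (by decide : (0 : Fin 2) ≠ 1) _ _ _ _ h1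
  have h2' : u.2 = v.2 := by
    rw [Prod.snd_mul, Prod.snd_mul] at h2
    simpa [pgen] using h2
  exact ⟨by omega, Prod.ext (freeMonoid_toList_inj hx) h2'⟩

theorem freeMonoid_fem : FemProperty (FreeMonoid (Fin 2) × FreeMonoid (Fin 2)) := by
  classical
  intro A instA hFG
  obtain ⟨T, hT⟩ := hFG
  let e : {x // x ∈ T} → ℕ := fun t => (T.equivFin t : ℕ)
  have e_inj : Function.Injective e := fun t t' h =>
    T.equivFin.injective (Fin.ext h)
  let p : {x // x ∈ T} → FreeMonoid (Fin 2) × FreeMonoid (Fin 2) := fun t => pgen (e t)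
  have pdisj : ∀ (t t' : {x // x ∈ T}) (u v : FreeMonoid (Fin 2) × FreeMonoid (Fin 2)),
      p t * u = p t' * v → t = t' ∧ u = v := by
    intro t t' u v h
    obtain ⟨hm, hx⟩ := pgen_disj h
    exact ⟨e_inj hm, hx⟩
  let g : {x // x ∈ T} → A := fun t => (t : A)
  -- the relation on A ⊕ S identifying `g t ⊳ u` with `p t * u`
  let r : (A ⊕ (FreeMonoid (Fin 2) × FreeMonoid (Fin 2))) →
      (A ⊕ (FreeMonoid (Fin 2) × FreeMonoid (Fin 2))) → Prop := fun x y =>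
    match x, y with
    | Sum.inl a, Sum.inl a' => a = a'
    | Sum.inl a, Sum.inr w => ∃ t u, w = p t * u ∧ a = g t ⊳ u
    | Sum.inr w, Sum.inl a => ∃ t u, w = p t * u ∧ a = g t ⊳ u
    | Sum.inr w, Sum.inr w' => w = w' ∨
        ∃ t t' u u', w = p t * u ∧ w' = p t' * u' ∧ g t ⊳ u = g t' ⊳ u'
  have rsymm : ∀ {x y}, r x y → r y x := by
    rintro (a | w) (a' | w') h
    · exact h.symm
    · exact h
    · exact h
    · rcases h with h | ⟨t, t', u, u', h1, h2, h3⟩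
      · exact Or.inl h.symm
      · exact Or.inr ⟨t', t, u', u, h2, h1, h3.symm⟩
  have rtrans : ∀ {x y z}, r x y → r y z → r x z := by
    rintro (a | w) (a' | w') (a'' | w'') h1 h2
    · exact h1.trans h2
    · exact h1 ▸ h2
    · obtain ⟨t, u, hw, ha⟩ := h1
      obtain ⟨t', u', hw', ha'⟩ := h2
      obtain ⟨htt, huu⟩ := pdisj t t' u u' (hw ▸ hw')
      subst htt; subst huu
      exact ha.trans ha'.symm
    · obtain ⟨t, u, hw, ha⟩ := h1
      rcases h2 with h2 | ⟨t', t'', u', u'', hw', hw'', hg⟩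
      · exact ⟨t, u, h2 ▸ hw, ha⟩
      · obtain ⟨htt, huu⟩ := pdisj t t' u u' (hw ▸ hw')
        subst htt; subst huu
        exact ⟨t'', u'', hw'', ha.trans hg⟩
    · -- inr w ~ inl a' ~ inl a''
      obtain ⟨t, u, hw, ha⟩ := h1
      exact ⟨t, u, hw, h2.symm.trans ha⟩
    · -- inr w ~ inl a' ~ inr w''
      obtain ⟨t, u, hw, ha⟩ := h1
      obtain ⟨t', u', hw', ha'⟩ := h2
      exact Or.inr ⟨t, t', u, u', hw, hw', ha.symm.trans ha'⟩
    · -- inr w ~ inr w' ~ inl a''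
      obtain ⟨t', u', hw', ha'⟩ := h2
      rcases h1 with h1 | ⟨t, t'', u, u'', hw, hw'', hg⟩
      · exact ⟨t', u', h1 ▸ hw', ha'⟩
      · obtain ⟨htt, huu⟩ := pdisj t'' t' u'' u' (hw'' ▸ hw')
        subst htt; subst huu
        exact ⟨t, u, hw, ha'.trans hg.symm⟩
    · -- inr inr inr
      rcases h1 with h1 | ⟨t, t', u, u', hw, hw', hg⟩
      · exact h1 ▸ h2
      rcases h2 with h2 | ⟨s1, s2, v1, v2, hv1, hv2, hg2⟩
      · exact Or.inr ⟨t, t', u, u', hw, h2 ▸ hw', hg⟩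
      · obtain ⟨htt, huu⟩ := pdisj t' s1 u' v1 (hw' ▸ hv1)
        subst htt; subst huu
        exact Or.inr ⟨t, s2, u, v2, hw, hv2, hg.trans hg2⟩
  have rrefl : ∀ x, r x x := by rintro (a | w); exacts [rfl, Or.inl rfl]
  have requiv : Equivalence r := ⟨rrefl, rsymm, rtrans⟩
  have ract : ∀ (x y : A ⊕ (FreeMonoid (Fin 2) × FreeMonoid (Fin 2)))
      (s : FreeMonoid (Fin 2) × FreeMonoid (Fin 2)), r x y → r (x ⊳ s) (y ⊳ s) := by
    rintro (a | w) (a' | w') s h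
    · exact h ▸ rfl
    · obtain ⟨t, u, hw, ha⟩ := h
      exact ⟨t, u * s, by show w' * s = p t * (u * s); rw [hw, mul_assoc],
        by show a ⊳ s = g t ⊳ (u * s); rw [ha, RAct.act_mul]⟩
    · obtain ⟨t, u, hw, ha⟩ := h
      exact ⟨t, u * s, by show w * s = p t * (u * s); rw [hw, mul_assoc],
        by show a' ⊳ s = g t ⊳ (u * s); rw [ha, RAct.act_mul]⟩
    · rcases h with h | ⟨t, t', u, u', hw, hw', hg⟩
      · exact Or.inl (h ▸ rfl)
      · exact Or.inr ⟨t, t', u * s, u' * s,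
          by show w * s = p t * (u * s); rw [hw, mul_assoc],
          by show w' * s = p t' * (u' * s); rw [hw', mul_assoc],
          by rw [RAct.act_mul, RAct.act_mul, hg]⟩
  let C := Quot r
  let instC : RAct (FreeMonoid (Fin 2) × FreeMonoid (Fin 2)) C := {
    act := fun q s => Quot.map (fun x => x ⊳ s) (fun x y h => ract x y s h) q
    act_one := by
      rintro ⟨x⟩
      show Quot.mk r (x ⊳ (1 : FreeMonoid (Fin 2) × FreeMonoid (Fin 2))) = Quot.mk r x
      rw [RAct.act_one]
    act_mul := by
      rintro ⟨x⟩ s t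
      show Quot.mk r (x ⊳ (s * t)) = Quot.mk r (x ⊳ s ⊳ t)
      rw [RAct.act_mul] }
  refine ⟨C, instC, ?_, ?_⟩
  · -- monogenic, generated by the class of `inr 1`
    refine ⟨Quot.mk r (Sum.inr 1), ?_⟩
    rintro ⟨(a | w)⟩
    · obtain ⟨t, ht, u, hu⟩ := hT a
      refine ⟨p ⟨t, ht⟩ * u, ?_⟩
      show Quot.mk r (Sum.inl a) =
        Quot.mk r (Sum.inr ((1 : FreeMonoid (Fin 2) × FreeMonoid (Fin 2)) *
          (p ⟨t, ht⟩ * u)))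
      rw [one_mul]
      exact Quot.sound ⟨⟨t, ht⟩, u, rfl, hu⟩
    · refine ⟨w, ?_⟩
      show Quot.mk r (Sum.inr w) =
        Quot.mk r (Sum.inr ((1 : FreeMonoid (Fin 2) × FreeMonoid (Fin 2)) * w))
      rw [one_mul]
  · -- A embeds
    refine ⟨fun a => Quot.mk r (Sum.inl a), fun a s => rfl, ?_⟩
    intro a a' h
    exact (Equivalence.eqvGen_iff requiv).mp (Quot.eq.mp h)

end FemAux

/-- In `S = F₂ × F₂`, `(a,1)S ∩ (b,1)S = ∅`, `(a,1)` and `(b,1)` are left cancellable,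
and `S` has the fem-property. -/
theorem freeMonoid_prod_fem :
    (∀ u v : FreeMonoid (Fin 2) × FreeMonoid (Fin 2),
      (FreeMonoid.of 0, (1 : FreeMonoid (Fin 2))) * u ≠
        (FreeMonoid.of 1, (1 : FreeMonoid (Fin 2))) * v) ∧
    (∀ u v : FreeMonoid (Fin 2) × FreeMonoid (Fin 2),
      (FreeMonoid.of 0, (1 : FreeMonoid (Fin 2))) * u =
        (FreeMonoid.of 0, (1 : FreeMonoid (Fin 2))) * v → u = v) ∧
    (∀ u v : FreeMonoid (Fin 2) × FreeMonoid (Fin 2),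
      (FreeMonoid.of 1, (1 : FreeMonoid (Fin 2))) * u =
        (FreeMonoid.of 1, (1 : FreeMonoid (Fin 2))) * v → u = v) ∧
    FemProperty (FreeMonoid (Fin 2) × FreeMonoid (Fin 2)) := by
  refine ⟨?_, ?_, ?_, freeMonoid_fem⟩
  · intro u v h
    have h1 : ((FreeMonoid.of 0, (1 : FreeMonoid (Fin 2))) * u).1.toList =
        ((FreeMonoid.of 1, (1 : FreeMonoid (Fin 2))) * v).1.toList := by rw [h]
    rw [Prod.fst_mul, Prod.fst_mul, FreeMonoid.toList_mul, FreeMonoid.toList_mul,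
      FreeMonoid.toList_of, FreeMonoid.toList_of] at h1
    simp only [List.singleton_append, List.cons.injEq] at h1
    exact absurd h1.1 (by decide)
  · intro u v h
    exact mul_left_cancel h
  · intro u v h
    exact mul_left_cancel h
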